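/- Let n ≥ 2 and d = n+1. Let H : ℝ^n \ {0} → ℝ satisfy the C-Z(1)(i) condition: H ∈ C¹(ℝ^n \ {0}) with |∇_x^j ∂_t^k H(x,t)| ≤ C_{j,k} ‖(x,t)‖^{-d-j-2k} for 0 ≤ j+k ≤ 1. Define H̃(x,t) := ∫_1^∞ r^d H(rx, r²t) r^{-2} dr for (x,t) ≠ 0. Then: (a) the integral converges absolutely and H̃ satisfies the C-Z(1)(i) condition with constants C'_{j,k} that are dimensional multiples of the C_{j,k}; (b) if H is even in the space variable (H(−x,t) = H(x,t)), then so is H̃; and if H is odd in the space variable, then so is H̃. -/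

import Mathlib

open MeasureTheory
open scoped ENNReal RealInnerProductSpace

noncomputable section

/-- The parabolic norm `‖(x,t)‖ = (|x|⁴ + t²)^(1/4)` on space-time `ℝ^m × ℝ`. -/
def pnorm {m : ℕ} (p : EuclideanSpace ℝ (Fin m) × ℝ) : ℝ :=
  (‖p.1‖ ^ 4 + p.2 ^ 2) ^ ((4 : ℝ)⁻¹)

/-- The parabolic C-Z(N)(i) condition with homogeneous dimension `d` and constants `C j k`:
`C^N` smoothness away from the origin, together with the bounds
`|∇_x^j ∂_t^k H(x,t)| ≤ C j k * ‖(x,t)‖^(-d-j-2k)` for all `0 ≤ j+k ≤ N`. -/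
def CZCond {m : ℕ} {F : Type*} [NormedAddCommGroup F] [NormedSpace ℝ F]
    (d : ℝ) (N : ℕ) (C : ℕ → ℕ → ℝ) (H : EuclideanSpace ℝ (Fin m) × ℝ → F) : Prop :=
  ContDiffOn ℝ N H {p | p ≠ 0} ∧
  ∀ j k : ℕ, j + k ≤ N → ∀ (x : EuclideanSpace ℝ (Fin m)) (t : ℝ),
    (x, t) ≠ 0 →
    ‖iteratedFDeriv ℝ j (fun y => iteratedDeriv k (fun s => H (y, s)) t) x‖
      ≤ C j k * pnorm (x, t) ^ (-d - j - 2 * k)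

/-- `H̃(x,t) = ∫_1^∞ r^d H(rx, r²t) r⁻² dr`. -/
def Htilde {m : ℕ} (d : ℝ) (H : EuclideanSpace ℝ (Fin m) × ℝ → ℝ)
    (p : EuclideanSpace ℝ (Fin m) × ℝ) : ℝ :=
  ∫ r in Set.Ioi (1 : ℝ), r ^ d * H (r • p.1, r ^ 2 * p.2) / r ^ 2

/-!
Write `pdil r (x, t) = (r • x, r² t)` for the parabolic dilation, so that
`pnorm (pdil r p) = r * pnorm p`. The C-Z bound for `H` at `pdil r p` gives
`|r^d H(pdil r p) / r²| ≤ C₀₀ r⁻² (pnorm p)^(-d)`. Differentiating the integrand in `x` (resp. `t`)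
produces a factor `r` (resp. `r²`) by the chain rule, which exactly compensates the extra decay
`(r pnorm p)⁻¹` (resp. `(r pnorm p)⁻²`) of the corresponding derivative of `H`. So every integrand
is dominated by a constant times `r⁻²`, whose integral over `(1, ∞)` is `1`: the integral converges,
it may be differentiated under the integral sign (locally uniformly in `p`, since `pnorm` is
continuous), and `H̃` satisfies the C-Z(1)(i) bounds with the same constants. Parity in `x` passes
to `H̃` because `pdil r` commutes with `x ↦ -x`.
-/

open Set Filter Topology

variable {m : ℕ}

def pdil (r : ℝ) : (EuclideanSpace ℝ (Fin m) × ℝ) →L[ℝ] EuclideanSpace ℝ (Fin m) × ℝ :=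
  (r • ContinuousLinearMap.id ℝ _).prodMap ((r ^ 2) • ContinuousLinearMap.id ℝ ℝ)

lemma pdil_apply (r : ℝ) (p : EuclideanSpace ℝ (Fin m) × ℝ) :
    pdil r p = (r • p.1, r ^ 2 * p.2) := rfl

lemma continuous_pdil : Continuous (pdil (m := m)) :=
  (ContinuousLinearMap.prodMapL ℝ _ _ _ _).continuous.comp
    ((continuous_id.smul continuous_const).prodMk ((continuous_pow 2).smul continuous_const))

lemma pnorm_nonneg (p : EuclideanSpace ℝ (Fin m) × ℝ) : 0 ≤ pnorm p := by
  unfold pnorm; positivity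

lemma continuous_pnorm : Continuous (pnorm (m := m)) :=
  (by fun_prop : Continuous fun p : EuclideanSpace ℝ (Fin m) × ℝ => ‖p.1‖ ^ 4 + p.2 ^ 2).rpow_const
    fun _ => Or.inr (by norm_num)

lemma pnorm_pdil {r : ℝ} (hr : 0 ≤ r) (p : EuclideanSpace ℝ (Fin m) × ℝ) :
    pnorm (pdil r p) = r * pnorm p := by
  have h4 : (r ^ 4) ^ ((4 : ℝ)⁻¹) = r := by exact_mod_cast Real.pow_rpow_inv_natCast hr four_ne_zero
  calc pnorm (pdil r p) = (r ^ 4 * (‖p.1‖ ^ 4 + p.2 ^ 2)) ^ ((4 : ℝ)⁻¹) := by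
        rw [pnorm, pdil_apply, norm_smul, Real.norm_of_nonneg hr]; ring_nf
    _ = r * pnorm p := by rw [Real.mul_rpow (by positivity) (by positivity), h4, pnorm]

lemma pnorm_zero_fst_one : pnorm ((0 : EuclideanSpace ℝ (Fin m)), (1 : ℝ)) = 1 := by
  simp [pnorm]

lemma ne_zero_of_pnorm_pos {p : EuclideanSpace ℝ (Fin m) × ℝ} (hp : 0 < pnorm p) : p ≠ 0 := by
  rintro rfl; simp [pnorm] at hp

lemma pnorm_pos {p : EuclideanSpace ℝ (Fin m) × ℝ} (hp : p ≠ 0) : 0 < pnorm p := by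
  refine Real.rpow_pos_of_pos ?_ _
  rcases eq_or_ne p.1 0 with h1 | h1
  · have h2 : p.2 ≠ 0 := fun h2 => hp (Prod.ext h1 h2)
    positivity
  · have := norm_pos_iff.2 h1
    positivity

lemma pdil_ne_zero {r : ℝ} (hr : 0 < r) {p : EuclideanSpace ℝ (Fin m) × ℝ} (hp : p ≠ 0) :
    pdil r p ≠ 0 :=
  ne_zero_of_pnorm_pos (by rw [pnorm_pdil hr.le]; exact mul_pos hr (pnorm_pos hp))

section Partial

variable {E F : Type*} [NormedAddCommGroup E] [NormedSpace ℝ E] [NormedAddCommGroup F]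
  [NormedSpace ℝ F] {f : E × ℝ → F} {L : E × ℝ →L[ℝ] F} {p : E × ℝ}

lemma ContDiffOn.hasFDerivAt_of_ne_zero {g : E → F} (hg : ContDiffOn ℝ 1 g {x | x ≠ 0}) {x : E}
    (hx : x ≠ 0) : HasFDerivAt g (fderiv ℝ g x) x :=
  ((hg.differentiableOn one_ne_zero).differentiableAt (isOpen_ne.mem_nhds hx)).hasFDerivAt

lemma HasFDerivAt.partial_fst (hf : HasFDerivAt f L p) :
    HasFDerivAt (fun y => f (y, p.2)) (L.comp (.inl ℝ E ℝ)) p.1 :=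
  hf.comp p.1 (hasFDerivAt_prodMk_left p.1 p.2)

lemma HasFDerivAt.partial_snd (hf : HasFDerivAt f L p) :
    HasDerivAt (fun t => f (p.1, t)) (L (0, 1)) p.2 :=
  hf.comp_hasDerivAt p.2 ((hasDerivAt_const p.2 p.1).prodMk (hasDerivAt_id p.2))

lemma ContinuousLinearMap.apply_prod_eq (v : E) (s : ℝ) :
    L (v, s) = L.comp (.inl ℝ E ℝ) v + s • L (0, 1) := by
  rw [← L.map_smul, L.comp_apply, ← map_add]
  simp

end Partial

namespace CZCond

variable {F : Type*} [NormedAddCommGroup F] [NormedSpace ℝ F] {d : ℝ} {N : ℕ}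
  {C : ℕ → ℕ → ℝ} {H : EuclideanSpace ℝ (Fin m) × ℝ → F} {p : EuclideanSpace ℝ (Fin m) × ℝ}

lemma nonneg (h : CZCond d N C H) {j k : ℕ} (hjk : j + k ≤ N) : 0 ≤ C j k := by
  have := h.2 j k hjk 0 1 (by simp)
  rw [pnorm_zero_fst_one, Real.one_rpow, mul_one] at this
  exact (norm_nonneg _).trans this

lemma norm_le (h : CZCond d N C H) (hp : p ≠ 0) : ‖H p‖ ≤ C 0 0 * pnorm p ^ (-d) := by
  simpa using h.2 0 0 (Nat.zero_le _) p.1 p.2 hp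

lemma norm_fderiv_apply_le (h : CZCond d 1 C H) (hp : p ≠ 0) (v : EuclideanSpace ℝ (Fin m))
    (s : ℝ) : ‖fderiv ℝ H p (v, s)‖ ≤
      C 1 0 * pnorm p ^ (-d - 1) * ‖v‖ + C 0 1 * pnorm p ^ (-d - 2) * |s| := by
  have hx : ‖(fderiv ℝ H p).comp (.inl ℝ _ ℝ)‖ ≤ C 1 0 * pnorm p ^ (-d - 1) := by
    simpa [(h.1.hasFDerivAt_of_ne_zero hp).partial_fst.fderiv] using h.2 1 0 le_rfl p.1 p.2 hp
  have ht : ‖fderiv ℝ H p (0, 1)‖ ≤ C 0 1 * pnorm p ^ (-d - 2) := by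
    simpa [(h.1.hasFDerivAt_of_ne_zero hp).partial_snd.deriv] using h.2 0 1 le_rfl p.1 p.2 hp
  rw [ContinuousLinearMap.apply_prod_eq]
  refine (norm_add_le _ _).trans ?_
  rw [norm_smul, Real.norm_eq_abs, mul_comm |s|]
  gcongr
  exact (ContinuousLinearMap.le_opNorm _ _).trans (by gcongr)

lemma of_norm_fderiv_apply_le (hH : ContDiffOn ℝ 1 H {p | p ≠ 0}) (hC : 0 ≤ C 1 0)
    (h₀ : ∀ p ≠ 0, ‖H p‖ ≤ C 0 0 * pnorm p ^ (-d))
    (h₁ : ∀ p ≠ 0, ∀ v s, ‖fderiv ℝ H p (v, s)‖ ≤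
      C 1 0 * pnorm p ^ (-d - 1) * ‖v‖ + C 0 1 * pnorm p ^ (-d - 2) * |s|) :
    CZCond d 1 C H := by
  refine ⟨hH, fun j k hjk x t hp => ?_⟩
  have hH' := hH.hasFDerivAt_of_ne_zero hp
  obtain ⟨rfl, rfl⟩ | ⟨rfl, rfl⟩ | ⟨rfl, rfl⟩ :
      (j = 0 ∧ k = 0) ∨ (j = 1 ∧ k = 0) ∨ (j = 0 ∧ k = 1) := by omega
  · simpa using h₀ _ hp
  · simp only [iteratedDeriv_zero, norm_iteratedFDeriv_one, hH'.partial_fst.fderiv]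
    refine ContinuousLinearMap.opNorm_le_bound _
      (mul_nonneg hC (Real.rpow_nonneg (pnorm_nonneg _) _)) fun v => ?_
    simpa using h₁ _ hp v 0
  · simpa [hH'.partial_snd.deriv] using h₁ _ hp 0 1

end CZCond

lemma rpow_div_sq_mul_mul_pow {r ρ : ℝ} (hr : 0 < r) (hρ : 0 ≤ ρ) (d : ℝ) (a : ℕ) :
    r ^ d / r ^ 2 * ((r * ρ) ^ (-d - a) * r ^ a) = r ^ (-2 : ℝ) * ρ ^ (-d - a) := by
  have hr' : r ^ d / r ^ 2 * r ^ (-d - a) * r ^ a = r ^ (-2 : ℝ) := by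
    rw [← Real.rpow_natCast, ← Real.rpow_natCast, div_eq_mul_inv, ← Real.rpow_neg hr.le,
      ← Real.rpow_add hr, ← Real.rpow_add hr, ← Real.rpow_add hr]
    ring_nf
  rw [Real.mul_rpow hr.le hρ]
  linear_combination ρ ^ (-d - a) * hr'

lemma integrableOn_Ioi_one_rpow_neg_two_mul (c : ℝ) :
    IntegrableOn (fun r : ℝ => r ^ (-2 : ℝ) * c) (Ioi 1) :=
  (integrableOn_Ioi_rpow_of_lt (by norm_num) one_pos).mul_const c

lemma norm_setIntegral_Ioi_one_le {F : Type*} [NormedAddCommGroup F] [NormedSpace ℝ F]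
    {f : ℝ → F} {c : ℝ} (hf : ∀ r ∈ Ioi (1 : ℝ), ‖f r‖ ≤ r ^ (-2 : ℝ) * c) :
    ‖∫ r in Ioi 1, f r‖ ≤ c :=
  calc ‖∫ r in Ioi 1, f r‖ ≤ ∫ r in Ioi 1, r ^ (-2 : ℝ) * c :=
        norm_integral_le_of_norm_le (integrableOn_Ioi_one_rpow_neg_two_mul c)
          (ae_restrict_of_forall_mem measurableSet_Ioi hf)
    _ = c := by
        rw [integral_mul_const, integral_Ioi_rpow_of_lt (by norm_num) one_pos]
        norm_num

section Htilde

variable {d : ℝ} {N : ℕ} {C : ℕ → ℕ → ℝ} {H : EuclideanSpace ℝ (Fin m) × ℝ → ℝ}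
  {p q : EuclideanSpace ℝ (Fin m) × ℝ} {r : ℝ}

def htildeIntegrand (d : ℝ) (H : EuclideanSpace ℝ (Fin m) × ℝ → ℝ)
    (p : EuclideanSpace ℝ (Fin m) × ℝ) (r : ℝ) : ℝ :=
  r ^ d * H (pdil r p) / r ^ 2

def htildeIntegrandFDeriv (d : ℝ) (H : EuclideanSpace ℝ (Fin m) × ℝ → ℝ)
    (p : EuclideanSpace ℝ (Fin m) × ℝ) (r : ℝ) : (EuclideanSpace ℝ (Fin m) × ℝ) →L[ℝ] ℝ :=
  (r ^ d / r ^ 2) • (fderiv ℝ H (pdil r p)).comp (pdil r)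

lemma norm_htildeIntegrand_le (h : CZCond d N C H) (hp : p ≠ 0) (hr : 0 < r) :
    ‖htildeIntegrand d H p r‖ ≤ r ^ (-2 : ℝ) * (C 0 0 * pnorm p ^ (-d)) := by
  have hb := h.norm_le (pdil_ne_zero hr hp)
  rw [pnorm_pdil hr.le] at hb
  have e := rpow_div_sq_mul_mul_pow hr (pnorm_nonneg p) d 0
  simp only [CharP.cast_eq_zero, sub_zero, pow_zero, mul_one] at e
  calc ‖htildeIntegrand d H p r‖ = r ^ d / r ^ 2 * ‖H (pdil r p)‖ := by
        rw [htildeIntegrand, norm_div, norm_mul, Real.norm_of_nonneg (Real.rpow_nonneg hr.le d),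
          Real.norm_of_nonneg (sq_nonneg r)]
        ring
    _ ≤ r ^ d / r ^ 2 * (C 0 0 * (r * pnorm p) ^ (-d)) := by gcongr
    _ = _ := by linear_combination C 0 0 * e

lemma continuousOn_htildeIntegrand (hH : ContinuousOn H {p | p ≠ 0}) (hp : p ≠ 0) :
    ContinuousOn (htildeIntegrand d H p) (Ioi 0) := by
  intro r (hr : 0 < r)
  have hHr : ContinuousAt (fun r => H (pdil r p)) r :=
    (hH.continuousAt (isOpen_ne.mem_nhds (pdil_ne_zero hr hp))).comp (f := fun r => pdil r p)
      (continuous_pdil.clm_apply continuous_const).continuousAt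
  exact (((Real.continuousAt_rpow_const r d (Or.inl hr.ne')).mul hHr).div
    (continuous_pow 2).continuousAt (by positivity)).continuousWithinAt

lemma aestronglyMeasurable_htildeIntegrand (hH : ContinuousOn H {p | p ≠ 0}) (hp : p ≠ 0) :
    AEStronglyMeasurable (htildeIntegrand d H p) (volume.restrict (Ioi 1)) :=
  ((continuousOn_htildeIntegrand hH hp).mono (Ioi_subset_Ioi zero_le_one)).aestronglyMeasurable
    measurableSet_Ioi

lemma integrableOn_htildeIntegrand (h : CZCond d N C H) (hp : p ≠ 0) :
    IntegrableOn (htildeIntegrand d H p) (Ioi 1) :=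
  (integrableOn_Ioi_one_rpow_neg_two_mul _).mono'
    (aestronglyMeasurable_htildeIntegrand h.1.continuousOn hp)
    (ae_restrict_of_forall_mem measurableSet_Ioi (fun _ hr =>
      norm_htildeIntegrand_le h hp (zero_lt_one.trans hr)))

lemma hasFDerivAt_htildeIntegrand (hH : DifferentiableAt ℝ H (pdil r p)) :
    HasFDerivAt (htildeIntegrand d H · r) (htildeIntegrandFDeriv d H p r) p :=
  ((hH.hasFDerivAt.comp p (pdil r).hasFDerivAt).const_mul (r ^ d / r ^ 2)).congr_of_eventuallyEq
    (Eventually.of_forall fun q => by simp only [htildeIntegrand, Function.comp_apply]; ring)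

lemma norm_htildeIntegrandFDeriv_apply_le (h : CZCond d 1 C H) (hp : p ≠ 0) (hr : 0 < r)
    (v : EuclideanSpace ℝ (Fin m)) (s : ℝ) :
    ‖htildeIntegrandFDeriv d H p r (v, s)‖ ≤
      r ^ (-2 : ℝ) * (C 1 0 * pnorm p ^ (-d - 1) * ‖v‖ + C 0 1 * pnorm p ^ (-d - 2) * |s|) := by
  have hb := h.norm_fderiv_apply_le (pdil_ne_zero hr hp) (r • v) (r ^ 2 * s)
  rw [pnorm_pdil hr.le, norm_smul, abs_mul, Real.norm_of_nonneg hr.le,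
    abs_of_nonneg (sq_nonneg r)] at hb
  have e₁ := rpow_div_sq_mul_mul_pow hr (pnorm_nonneg p) d 1
  have e₂ := rpow_div_sq_mul_mul_pow hr (pnorm_nonneg p) d 2
  push_cast at e₁ e₂
  rw [pow_one] at e₁
  calc ‖htildeIntegrandFDeriv d H p r (v, s)‖
        = r ^ d / r ^ 2 * ‖fderiv ℝ H (pdil r p) (r • v, r ^ 2 * s)‖ := by
        rw [htildeIntegrandFDeriv, smul_apply, norm_smul,
          Real.norm_of_nonneg (by positivity), ContinuousLinearMap.comp_apply, pdil_apply r (v, s)]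
    _ ≤ r ^ d / r ^ 2 * (C 1 0 * (r * pnorm p) ^ (-d - 1) * (r * ‖v‖)
          + C 0 1 * (r * pnorm p) ^ (-d - 2) * (r ^ 2 * |s|)) := by gcongr
    _ = _ := by
        linear_combination C 1 0 * ‖v‖ * e₁ + C 0 1 * |s| * e₂

lemma norm_htildeIntegrandFDeriv_le (h : CZCond d 1 C H) (hd : -1 ≤ d) {ρ : ℝ} (hρ : 0 < ρ)
    (hρq : ρ ≤ pnorm q) (hr : 0 < r) :
    ‖htildeIntegrandFDeriv d H q r‖ ≤
      r ^ (-2 : ℝ) * (C 1 0 * ρ ^ (-d - 1) + C 0 1 * ρ ^ (-d - 2)) := by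
  have hq := ne_zero_of_pnorm_pos (hρ.trans_le hρq)
  have h₁₀ := h.nonneg (j := 1) (k := 0) le_rfl
  have h₀₁ := h.nonneg (j := 0) (k := 1) le_rfl
  refine ContinuousLinearMap.opNorm_le_bound _ (by positivity) fun ⟨v, s⟩ => ?_
  have hv : ‖v‖ ≤ ‖(v, s)‖ := norm_fst_le (v, s)
  have hs : |s| ≤ ‖(v, s)‖ := norm_snd_le (v, s)
  have hρ₁ : pnorm q ^ (-d - 1) ≤ ρ ^ (-d - 1) := Real.rpow_le_rpow_of_nonpos hρ hρq (by linarith)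
  have hρ₂ : pnorm q ^ (-d - 2) ≤ ρ ^ (-d - 2) := Real.rpow_le_rpow_of_nonpos hρ hρq (by linarith)
  refine (norm_htildeIntegrandFDeriv_apply_le h hq hr v s).trans ?_
  calc r ^ (-2 : ℝ) * (C 1 0 * pnorm q ^ (-d - 1) * ‖v‖ + C 0 1 * pnorm q ^ (-d - 2) * |s|)
      ≤ r ^ (-2 : ℝ) * (C 1 0 * ρ ^ (-d - 1) * ‖(v, s)‖ + C 0 1 * ρ ^ (-d - 2) * ‖(v, s)‖) := by
        gcongr
    _ = _ := by ring

lemma continuousAt_htildeIntegrandFDeriv (hH : ContDiffOn ℝ 1 H {p | p ≠ 0}) (hp : p ≠ 0)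
    (hr : 0 < r) :
    ContinuousAt (fun x : (EuclideanSpace ℝ (Fin m) × ℝ) × ℝ => htildeIntegrandFDeriv d H x.1 x.2)
      (p, r) := by
  have hdil : Continuous fun x : (EuclideanSpace ℝ (Fin m) × ℝ) × ℝ => pdil x.2 x.1 :=
    (continuous_pdil.comp continuous_snd).clm_apply continuous_fst
  have hfderiv : ContinuousAt (fderiv ℝ H) (pdil r p) :=
    (hH.continuousOn_fderiv_of_isOpen isOpen_ne le_rfl).continuousAt
      (isOpen_ne.mem_nhds (pdil_ne_zero hr hp))
  have hpow : ContinuousAt (fun r : ℝ => r ^ d / r ^ 2) r :=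
    (Real.continuousAt_rpow_const r d (Or.inl hr.ne')).div (continuous_pow 2).continuousAt
      (by positivity)
  exact (hpow.comp_of_eq continuous_snd.continuousAt rfl).smul
    ((hfderiv.comp_of_eq hdil.continuousAt rfl).clm_comp
      (continuous_pdil.comp continuous_snd).continuousAt)

lemma aestronglyMeasurable_htildeIntegrandFDeriv (hH : ContDiffOn ℝ 1 H {p | p ≠ 0})
    (hp : p ≠ 0) : AEStronglyMeasurable (htildeIntegrandFDeriv d H p) (volume.restrict (Ioi 1)) :=
  ContinuousOn.aestronglyMeasurable (fun r (hr : 1 < r) =>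
    ((continuousAt_htildeIntegrandFDeriv hH hp (zero_lt_one.trans hr)).comp_of_eq
      (continuous_const.prodMk continuous_id).continuousAt rfl).continuousWithinAt)
    measurableSet_Ioi

lemma exists_eventually_norm_htildeIntegrandFDeriv_le (h : CZCond d 1 C H) (hd : -1 ≤ d)
    (hp : p ≠ 0) : ∃ M : ℝ, ∀ᶠ q in 𝓝 p, q ≠ 0 ∧
      ∀ r, 0 < r → ‖htildeIntegrandFDeriv d H q r‖ ≤ r ^ (-2 : ℝ) * M := by
  have hρ : 0 < pnorm p / 2 := half_pos (pnorm_pos hp)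
  refine ⟨C 1 0 * (pnorm p / 2) ^ (-d - 1) + C 0 1 * (pnorm p / 2) ^ (-d - 2), ?_⟩
  filter_upwards [continuous_pnorm.continuousAt.eventually
    (lt_mem_nhds (half_lt_self (pnorm_pos hp)))] with q hq
  exact ⟨ne_zero_of_pnorm_pos (hρ.trans hq),
    fun r hr => norm_htildeIntegrandFDeriv_le h hd hρ hq.le hr⟩

lemma hasFDerivAt_htilde (h : CZCond d 1 C H) (hd : -1 ≤ d) (hp : p ≠ 0) :
    HasFDerivAt (Htilde d H) (∫ r in Ioi 1, htildeIntegrandFDeriv d H p r) p := by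
  obtain ⟨M, hs⟩ := exists_eventually_norm_htildeIntegrandFDeriv_le h hd hp
  refine hasFDerivAt_integral_of_dominated_of_fderiv_le hs
    (hs.mono fun q hq => aestronglyMeasurable_htildeIntegrand h.1.continuousOn hq.1)
    (integrableOn_htildeIntegrand h hp) (aestronglyMeasurable_htildeIntegrandFDeriv h.1 hp) ?_
    (integrableOn_Ioi_one_rpow_neg_two_mul M) ?_
  all_goals
    refine ae_restrict_of_forall_mem measurableSet_Ioi (fun r (hr : 1 < r) q hq => ?_)
  · exact hq.2 r (zero_lt_one.trans hr)
  · exact hasFDerivAt_htildeIntegrand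
      (h.1.hasFDerivAt_of_ne_zero (pdil_ne_zero (zero_lt_one.trans hr) hq.1)).differentiableAt

lemma continuousOn_integral_htildeIntegrandFDeriv (h : CZCond d 1 C H) (hd : -1 ≤ d) :
    ContinuousOn (fun p => ∫ r in Ioi 1, htildeIntegrandFDeriv d H p r) {p | p ≠ 0} := by
  intro p hp
  obtain ⟨M, hs⟩ := exists_eventually_norm_htildeIntegrandFDeriv_le h hd hp
  refine (continuousAt_of_dominated
    (hs.mono fun q hq => aestronglyMeasurable_htildeIntegrandFDeriv h.1 hq.1)
    (hs.mono fun q hq => ae_restrict_of_forall_mem measurableSet_Ioi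
      (fun r (hr : 1 < r) => hq.2 r (zero_lt_one.trans hr)))
    (integrableOn_Ioi_one_rpow_neg_two_mul M)
    (ae_restrict_of_forall_mem measurableSet_Ioi (fun r (hr : 1 < r) =>
      (continuousAt_htildeIntegrandFDeriv h.1 hp (zero_lt_one.trans hr)).comp_of_eq
        (continuous_id.prodMk continuous_const).continuousAt rfl))).continuousWithinAt

lemma integrable_htildeIntegrandFDeriv (h : CZCond d 1 C H) (hd : -1 ≤ d) (hp : p ≠ 0) :
    Integrable (htildeIntegrandFDeriv d H p) (volume.restrict (Ioi 1)) := by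
  obtain ⟨M, hs⟩ := exists_eventually_norm_htildeIntegrandFDeriv_le h hd hp
  exact (integrableOn_Ioi_one_rpow_neg_two_mul M).mono'
    (aestronglyMeasurable_htildeIntegrandFDeriv h.1 hp)
    (ae_restrict_of_forall_mem measurableSet_Ioi (fun r (hr : 1 < r) =>
      hs.self_of_nhds.2 r (zero_lt_one.trans hr)))

lemma CZCond.htilde (h : CZCond d 1 C H) (hd : -1 ≤ d) : CZCond d 1 C (Htilde d H) := by
  have hderiv := fun p (hp : p ≠ 0) => hasFDerivAt_htilde h hd hp
  refine .of_norm_fderiv_apply_le ?_ (h.nonneg le_rfl) (fun p hp => ?_) (fun p hp v s => ?_)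
  · rw [← zero_add (1 : WithTop ℕ∞),
      contDiffOn_succ_iff_fderiv_of_isOpen isOpen_ne, contDiffOn_zero]
    exact ⟨fun p hp => (hderiv p hp).differentiableAt.differentiableWithinAt, by simp,
      (continuousOn_integral_htildeIntegrandFDeriv h hd).congr fun p hp => (hderiv p hp).fderiv⟩
  · exact norm_setIntegral_Ioi_one_le fun r hr =>
      norm_htildeIntegrand_le h hp (zero_lt_one.trans hr)
  · rw [(hderiv p hp).fderiv, ContinuousLinearMap.integral_apply
      (integrable_htildeIntegrandFDeriv h hd hp)]
    exact norm_setIntegral_Ioi_one_le fun r hr =>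
      norm_htildeIntegrandFDeriv_apply_le h hp (zero_lt_one.trans hr) v s

lemma htilde_neg_of_even (hH : ∀ x t, H (-x, t) = H (x, t)) (x : EuclideanSpace ℝ (Fin m))
    (t : ℝ) : Htilde d H (-x, t) = Htilde d H (x, t) := by
  simp only [Htilde, smul_neg, hH]

lemma htilde_neg_of_odd (hH : ∀ x t, H (-x, t) = -H (x, t)) (x : EuclideanSpace ℝ (Fin m))
    (t : ℝ) : Htilde d H (-x, t) = -Htilde d H (x, t) := by
  simp only [Htilde, smul_neg, hH, mul_neg, neg_div, integral_neg]

end Htilde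

theorem statement9_general (n : ℕ) :
    ∃ c : ℕ → ℕ → ℝ,  -- dimensional constants, depending only on n
    ∀ (CK : ℕ → ℕ → ℝ) (H : EuclideanSpace ℝ (Fin (n - 1)) × ℝ → ℝ),
      CZCond (n + 1 : ℝ) 1 CK H →
      (∀ p : EuclideanSpace ℝ (Fin (n - 1)) × ℝ, p ≠ 0 →
        IntegrableOn (fun r : ℝ => r ^ (n + 1 : ℝ) * H (r • p.1, r ^ 2 * p.2) / r ^ 2)
          (Set.Ioi (1 : ℝ))) ∧
      CZCond (n + 1 : ℝ) 1 (fun j k => c j k * CK j k) (Htilde (n + 1 : ℝ) H) ∧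
      ((∀ (x : EuclideanSpace ℝ (Fin (n - 1))) (t : ℝ), H (-x, t) = H (x, t)) →
        ∀ (x : EuclideanSpace ℝ (Fin (n - 1))) (t : ℝ),
          Htilde (n + 1 : ℝ) H (-x, t) = Htilde (n + 1 : ℝ) H (x, t)) ∧
      ((∀ (x : EuclideanSpace ℝ (Fin (n - 1))) (t : ℝ), H (-x, t) = -H (x, t)) →
        ∀ (x : EuclideanSpace ℝ (Fin (n - 1))) (t : ℝ),
          Htilde (n + 1 : ℝ) H (-x, t) = -Htilde (n + 1 : ℝ) H (x, t)) := by
  refine ⟨fun _ _ => 1, fun CK H h => ⟨fun p hp => integrableOn_htildeIntegrand h hp, ?_,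
    htilde_neg_of_even, htilde_neg_of_odd⟩⟩
  simpa only [one_mul] using h.htilde (by linarith)

/-- for `H ∈ C-Z(1)(i)` on `ℝ^n` (`d = n+1`), the integral defining `H̃`
converges absolutely; `H̃` again satisfies the C-Z(1)(i) condition, with constants which
are dimensional multiples `c j k * CK j k` of the original constants; and `H̃` inherits
evenness/oddness in the space variable from `H`. -/
theorem statement9 (n : ℕ) (hn : 2 ≤ n) :
    ∃ c : ℕ → ℕ → ℝ,  -- dimensional constants, depending only on n
    ∀ (CK : ℕ → ℕ → ℝ) (H : EuclideanSpace ℝ (Fin (n - 1)) × ℝ → ℝ),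
      CZCond (n + 1 : ℝ) 1 CK H →
      (∀ p : EuclideanSpace ℝ (Fin (n - 1)) × ℝ, p ≠ 0 →
        IntegrableOn (fun r : ℝ => r ^ (n + 1 : ℝ) * H (r • p.1, r ^ 2 * p.2) / r ^ 2)
          (Set.Ioi (1 : ℝ))) ∧
      CZCond (n + 1 : ℝ) 1 (fun j k => c j k * CK j k) (Htilde (n + 1 : ℝ) H) ∧
      ((∀ (x : EuclideanSpace ℝ (Fin (n - 1))) (t : ℝ), H (-x, t) = H (x, t)) →
        ∀ (x : EuclideanSpace ℝ (Fin (n - 1))) (t : ℝ),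
          Htilde (n + 1 : ℝ) H (-x, t) = Htilde (n + 1 : ℝ) H (x, t)) ∧
      ((∀ (x : EuclideanSpace ℝ (Fin (n - 1))) (t : ℝ), H (-x, t) = -H (x, t)) →
        ∀ (x : EuclideanSpace ℝ (Fin (n - 1))) (t : ℝ),
          Htilde (n + 1 : ℝ) H (-x, t) = -Htilde (n + 1 : ℝ) H (x, t)) :=
  statement9_general n
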